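/- Let d ≥ 1 and let u : ℝ × ℝ → ℝ^d be a smooth (C^∞) solution of the vmKdV equation u_t + (3/2)‖u‖² u_x + u_xxx = 0 that is 1-periodic in x. Set C₂ = F₂(u)(0) and C₄ = F₄(u)(0), and suppose C_GN > 0 is a constant such that for every t the Gagliardo–Nirenberg inequality (∫₀¹‖u(x,t)‖⁴ dx)^{1/4} ≤ C_GN (∫₀¹‖u(x,t)‖² dx)^{3/8} (∫₀¹‖u_x(x,t)‖² dx)^{1/8} holds. Then for every t, (∫₀¹ ‖u_x(x,t)‖² dx)^{1/2} ≤ (4·C₄ + C_GN⁸ · C₂³ / 2)^{1/2}. -/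

import Mathlib

open Real MeasureTheory intervalIntegral InnerProductSpace ContDiff

/-- Partial derivative in the first (space) variable. -/
noncomputable def pdx {E : Type*} [NormedAddCommGroup E] [NormedSpace ℝ E]
    (u : ℝ → ℝ → E) : ℝ → ℝ → E := fun x t => deriv (fun y => u y t) x

/-- Partial derivative in the second (time) variable. -/
noncomputable def pdt {E : Type*} [NormedAddCommGroup E] [NormedSpace ℝ E]
    (u : ℝ → ℝ → E) : ℝ → ℝ → E := fun x t => deriv (fun s => u x s) t

/-- The vectorial modified KdV equation `u_t + (3/2)‖u‖² u_x + u_xxx = 0`. -/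
def IsVmKdV {d : ℕ} (u : ℝ → ℝ → EuclideanSpace ℝ (Fin d)) : Prop :=
  ∀ x t : ℝ,
    pdt u x t + ((3 : ℝ) / 2 * ‖u x t‖ ^ 2) • pdx u x t + pdx (pdx (pdx u)) x t = 0

/-!
Momentum and energy are conserved: by the equation (and `u_xt = u_tx`), the time derivatives
of their densities are `x`-derivatives of fluxes that are `1`-periodic, so their integrals over a
period vanish. Hence at every time `‖u‖₂² = 2C₂` and `‖u_x‖₂² = 2C₄ + ‖u‖₄⁴/4`. The
Gagliardo–Nirenberg inequality bounds `‖u‖₄⁴` by `C_GN⁴ ‖u‖₂³ ‖u_x‖₂`, so `s = ‖u_x‖₂` satisfies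
`s² ≤ 2C₄ + b s` with `b = C_GN⁴ (2C₂)^{3/2} / 4`, and therefore `s² ≤ 4C₄ + b²`.
-/

open Function RealInnerProductSpace

section PartialDerivatives

variable {E : Type*} [NormedAddCommGroup E] [NormedSpace ℝ E] {u : ℝ → ℝ → E}

theorem hasDerivAt_pdx {x t : ℝ} (hu : DifferentiableAt ℝ (uncurry u) (x, t)) :
    HasDerivAt (fun y => u y t) (pdx u x t) x :=
  (hu.comp x (by fun_prop : DifferentiableAt ℝ (fun y : ℝ => (y, t)) x) :).hasDerivAt

theorem hasDerivAt_pdt {x t : ℝ} (hu : DifferentiableAt ℝ (uncurry u) (x, t)) :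
    HasDerivAt (u x) (pdt u x t) t :=
  (hu.comp t (by fun_prop : DifferentiableAt ℝ (fun s : ℝ => (x, s)) t) :).hasDerivAt

theorem pdx_eq_fderiv {x t : ℝ} (hu : DifferentiableAt ℝ (uncurry u) (x, t)) :
    pdx u x t = fderiv ℝ (uncurry u) (x, t) (1, 0) :=
  (hasDerivAt_pdx hu).unique
    (hu.hasFDerivAt.comp_hasDerivAt x ((hasDerivAt_id' x).prodMk (hasDerivAt_const x t)) :)

theorem pdt_eq_fderiv {x t : ℝ} (hu : DifferentiableAt ℝ (uncurry u) (x, t)) :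
    pdt u x t = fderiv ℝ (uncurry u) (x, t) (0, 1) :=
  (hasDerivAt_pdt hu).unique
    (hu.hasFDerivAt.comp_hasDerivAt t ((hasDerivAt_const t x).prodMk (hasDerivAt_id' t)) :)

theorem contDiff_pdx (hu : ContDiff ℝ ∞ (uncurry u)) : ContDiff ℝ ∞ (uncurry (pdx u)) := by
  have h : uncurry (pdx u) = fun p => fderiv ℝ (uncurry u) p (1, 0) :=
    funext fun p => pdx_eq_fderiv (hu.differentiable (by simp) p)
  rw [h]
  exact (hu.fderiv_right (by simp)).clm_apply contDiff_const

theorem contDiff_pdt (hu : ContDiff ℝ ∞ (uncurry u)) : ContDiff ℝ ∞ (uncurry (pdt u)) := by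
  have h : uncurry (pdt u) = fun p => fderiv ℝ (uncurry u) p (0, 1) :=
    funext fun p => pdt_eq_fderiv (hu.differentiable (by simp) p)
  rw [h]
  exact (hu.fderiv_right (by simp)).clm_apply contDiff_const

theorem pdx_add_of_periodic {c : ℝ} (hu : ∀ x t, u (x + c) t = u x t) (x t : ℝ) :
    pdx u (x + c) t = pdx u x t := by
  simp only [pdx, ← deriv_comp_add_const, hu]

theorem pdx_pdt_comm (hu : ContDiff ℝ 2 (uncurry u)) (x t : ℝ) :
    pdx (pdt u) x t = pdt (pdx u) x t := by
  have hdiff : Differentiable ℝ (uncurry u) := hu.differentiable (by simp)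
  have hD : DifferentiableAt ℝ (fderiv ℝ (uncurry u)) (x, t) :=
    (hu.fderiv_right (m := 1) (by norm_num)).differentiable (by simp) (x, t)
  have hpdt : uncurry (pdt u) = fun p => fderiv ℝ (uncurry u) p (0, 1) :=
    funext fun p => pdt_eq_fderiv (hdiff p)
  have hpdx : uncurry (pdx u) = fun p => fderiv ℝ (uncurry u) p (1, 0) :=
    funext fun p => pdx_eq_fderiv (hdiff p)
  have hpdt' : DifferentiableAt ℝ (uncurry (pdt u)) (x, t) := by
    rw [hpdt]; exact hD.clm_apply (differentiableAt_const _)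
  have hpdx' : DifferentiableAt ℝ (uncurry (pdx u)) (x, t) := by
    rw [hpdx]; exact hD.clm_apply (differentiableAt_const _)
  rw [pdx_eq_fderiv hpdt', pdt_eq_fderiv hpdx', hpdt, hpdx,
    fderiv_clm_apply hD (differentiableAt_const _), fderiv_clm_apply hD (differentiableAt_const _)]
  simpa using hu.contDiffAt.isSymmSndFDerivAt (by simp) (1, 0) (0, 1)

end PartialDerivatives

section ConservationLaw

variable {E : Type*} [NormedAddCommGroup E] [NormedSpace ℝ E]

theorem hasDerivAt_intervalIntegral_of_continuous {F F' : ℝ → ℝ → E} {a b : ℝ}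
    (hF : Continuous (uncurry F)) (hF' : Continuous (uncurry F'))
    (hFt : ∀ x t, HasDerivAt (F x) (F' x t) t) (t₀ : ℝ) :
    HasDerivAt (fun t => ∫ x in a..b, F x t) (∫ x in a..b, F' x t₀) t₀ := by
  obtain ⟨M, hM⟩ : ∃ M, ∀ p ∈ Set.uIcc a b ×ˢ Metric.closedBall t₀ 1, ‖uncurry F' p‖ ≤ M :=
    (isCompact_uIcc.prod (isCompact_closedBall t₀ 1)).exists_bound_of_continuousOn
      hF'.continuousOn
  refine (intervalIntegral.hasDerivAt_integral_of_dominated_loc_of_deriv_le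
    (F := fun t x => F x t) (bound := fun _ => M) (Metric.ball_mem_nhds t₀ one_pos)
    (.of_forall fun t => (hF.uncurry_right t).aestronglyMeasurable)
    ((hF.uncurry_right t₀).intervalIntegrable a b)
    (hF'.uncurry_right t₀).aestronglyMeasurable
    (ae_of_all _ fun x hx t ht =>
      hM (x, t) ⟨Set.uIoc_subset_uIcc hx, Metric.ball_subset_closedBall ht⟩)
    intervalIntegrable_const (ae_of_all _ fun x _ t _ => hFt x t)).2

theorem integral_eq_integral_of_conservation_law {ρ ρ' J : ℝ → ℝ → ℝ} {a b : ℝ}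
    (hρ : Continuous (uncurry ρ)) (hρ' : Continuous (uncurry ρ'))
    (hρt : ∀ x t, HasDerivAt (ρ x) (ρ' x t) t)
    (hJx : ∀ x t, HasDerivAt (fun y => J y t) (ρ' x t) x)
    (hJ : ∀ t, J b t = J a t) (s t : ℝ) :
    ∫ x in a..b, ρ x s = ∫ x in a..b, ρ x t := by
  have hderiv (t₀ : ℝ) : HasDerivAt (fun t => ∫ x in a..b, ρ x t) 0 t₀ := by
    have h := hasDerivAt_intervalIntegral_of_continuous (a := a) (b := b) hρ hρ' hρt t₀
    rwa [intervalIntegral.integral_eq_sub_of_hasDerivAt (fun x _ => hJx x t₀)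
      ((hρ'.uncurry_right t₀).intervalIntegrable a b), hJ, sub_self] at h
  exact is_const_of_deriv_eq_zero (fun t => (hderiv t).differentiableAt)
    (fun t => (hderiv t).deriv) s t

end ConservationLaw

section Fluxes

variable {E : Type*} [NormedAddCommGroup E] [InnerProductSpace ℝ E]

/-- `u_t` for a solution, as a function of `(u, u_x, u_xxx)`. -/
noncomputable def vmkdvField (v v₁ v₃ : E) : E := -((3 / 2 * ‖v‖ ^ 2) • v₁ + v₃)

noncomputable def momentumFlux (v v₁ v₂ : E) : ℝ := -(3 / 8) * ‖v‖ ^ 4 - ⟪v, v₂⟫ + 1 / 2 * ‖v₁‖ ^ 2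

noncomputable def energyFlux (v v₁ v₂ v₃ : E) : ℝ :=
  -(‖v‖ ^ 2 * ‖v₁‖ ^ 2) - ⟪v₁, v₃⟫ + 1 / 2 * ‖v₂‖ ^ 2 + 1 / 8 * ‖v‖ ^ 6
    + 1 / 2 * ‖v‖ ^ 2 * ⟪v, v₂⟫ - 1 / 2 * ⟪v, v₁⟫ ^ 2

variable {v v₁ v₂ v₃ v₄ : ℝ → E} {x : ℝ}

theorem hasDerivAt_vmkdvField (hv : HasDerivAt v (v₁ x) x) (hv₁ : HasDerivAt v₁ (v₂ x) x)
    (hv₃ : HasDerivAt v₃ (v₄ x) x) :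
    HasDerivAt (fun y => vmkdvField (v y) (v₁ y) (v₃ y))
      (-((3 * ⟪v x, v₁ x⟫) • v₁ x + (3 / 2 * ‖v x‖ ^ 2) • v₂ x + v₄ x)) x := by
  refine (((hv.norm_sq.const_mul (3 / 2)).smul hv₁).add hv₃).neg.congr_deriv ?_
  rw [add_comm ((3 / 2 * ‖v x‖ ^ 2) • v₂ x), ← mul_assoc]
  norm_num

theorem hasDerivAt_momentumFlux (hv : HasDerivAt v (v₁ x) x) (hv₁ : HasDerivAt v₁ (v₂ x) x)
    (hv₂ : HasDerivAt v₂ (v₃ x) x) :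
    HasDerivAt (fun y => momentumFlux (v y) (v₁ y) (v₂ y))
      ⟪v x, vmkdvField (v x) (v₁ x) (v₃ x)⟫ x := by
  have H := (((hv.norm_sq.fun_pow 2).const_mul (-(3 / 8))).sub (hv.inner ℝ hv₂)).add
    (hv₁.norm_sq.const_mul (1 / 2))
  refine (H.congr_of_eventuallyEq (.of_forall fun y => ?_)).congr_deriv ?_
  · simp only [momentumFlux, Pi.add_apply, Pi.sub_apply]; ring
  · simp only [vmkdvField, inner_neg_right, inner_add_right, real_inner_smul_right]
    push_cast; ring

theorem hasDerivAt_energyFlux (hv : HasDerivAt v (v₁ x) x) (hv₁ : HasDerivAt v₁ (v₂ x) x)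
    (hv₂ : HasDerivAt v₂ (v₃ x) x) (hv₃ : HasDerivAt v₃ (v₄ x) x) {w' : E}
    (hw : HasDerivAt (fun y => vmkdvField (v y) (v₁ y) (v₃ y)) w' x) :
    HasDerivAt (fun y => energyFlux (v y) (v₁ y) (v₂ y) (v₃ y))
      (⟪v₁ x, w'⟫ - 1 / 2 * ‖v x‖ ^ 2 * ⟪v x, vmkdvField (v x) (v₁ x) (v₃ x)⟫) x := by
  have H := ((((((hv.norm_sq.mul hv₁.norm_sq).neg.sub (hv₁.inner ℝ hv₃)).add
    (hv₂.norm_sq.const_mul (1 / 2))).add ((hv.norm_sq.fun_pow 3).const_mul (1 / 8))).add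
    ((hv.norm_sq.mul (hv.inner ℝ hv₂)).const_mul (1 / 2))).sub
    (((hv.inner ℝ hv₁).fun_pow 2).const_mul (1 / 2)))
  refine (H.congr_of_eventuallyEq (.of_forall fun y => ?_)).congr_deriv ?_
  · simp only [energyFlux, Pi.add_apply, Pi.sub_apply, Pi.mul_apply, Pi.neg_apply]; ring
  · rw [hw.unique (hasDerivAt_vmkdvField hv hv₁ hv₃)]
    simp only [vmkdvField, inner_neg_right, inner_add_right, real_inner_smul_right,
      real_inner_self_eq_norm_sq]
    push_cast; ring

end Fluxes

namespace IsVmKdV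

variable {d : ℕ} {u : ℝ → ℝ → EuclideanSpace ℝ (Fin d)}

theorem pdt_eq (hsol : IsVmKdV u) (x t : ℝ) :
    pdt u x t = vmkdvField (u x t) (pdx u x t) (pdx (pdx (pdx u)) x t) := by
  have h := hsol x t
  rw [add_assoc] at h
  exact eq_neg_of_add_eq_zero_left h

theorem momentum_conserved (hsol : IsVmKdV u) (hu : ContDiff ℝ ∞ (uncurry u))
    (hper : ∀ x t, u (x + 1) t = u x t) (s t : ℝ) :
    ∫ x in (0 : ℝ)..1, 1 / 2 * ‖u x s‖ ^ 2 = ∫ x in (0 : ℝ)..1, 1 / 2 * ‖u x t‖ ^ 2 := by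
  have hx {w : ℝ → ℝ → EuclideanSpace ℝ (Fin d)} (hw : ContDiff ℝ ∞ (uncurry w)) (x t : ℝ) :
      HasDerivAt (fun y => w y t) (pdx w x t) x :=
    hasDerivAt_pdx (hw.differentiable (by simp) _)
  have hu₁ := contDiff_pdx hu
  refine integral_eq_integral_of_conservation_law (ρ := fun x t => 1 / 2 * ‖u x t‖ ^ 2)
    (ρ' := fun x t => ⟪u x t, pdt u x t⟫)
    (J := fun x t => momentumFlux (u x t) (pdx u x t) (pdx (pdx u) x t))
    ((hu.continuous.norm.pow 2).const_mul _)
    (hu.continuous.inner (contDiff_pdt hu).continuous) (fun x t => ?_) (fun x t => ?_)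
    (fun t => ?_) s t
  · have h := (hasDerivAt_pdt (hu.differentiable (by simp) (x, t))).norm_sq.const_mul (1 / 2)
    exact h.congr_deriv (by ring)
  · exact hsol.pdt_eq x t ▸ hasDerivAt_momentumFlux (hx hu x t) (hx hu₁ x t)
      (hx (contDiff_pdx hu₁) x t)
  · refine Periodic.eq (f := fun x => momentumFlux (u x t) (pdx u x t) (pdx (pdx u) x t))
      fun x => ?_
    simp only [hper, pdx_add_of_periodic hper, pdx_add_of_periodic (pdx_add_of_periodic hper)]

theorem energy_conserved (hsol : IsVmKdV u) (hu : ContDiff ℝ ∞ (uncurry u))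
    (hper : ∀ x t, u (x + 1) t = u x t) (s t : ℝ) :
    ∫ x in (0 : ℝ)..1, 1 / 2 * ‖pdx u x s‖ ^ 2 - 1 / 8 * ‖u x s‖ ^ 4
      = ∫ x in (0 : ℝ)..1, 1 / 2 * ‖pdx u x t‖ ^ 2 - 1 / 8 * ‖u x t‖ ^ 4 := by
  have hx {w : ℝ → ℝ → EuclideanSpace ℝ (Fin d)} (hw : ContDiff ℝ ∞ (uncurry w)) (x t : ℝ) :
      HasDerivAt (fun y => w y t) (pdx w x t) x :=
    hasDerivAt_pdx (hw.differentiable (by simp) _)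
  have ht {w : ℝ → ℝ → EuclideanSpace ℝ (Fin d)} (hw : ContDiff ℝ ∞ (uncurry w)) (x t : ℝ) :
      HasDerivAt (w x) (pdt w x t) t :=
    hasDerivAt_pdt (hw.differentiable (by simp) _)
  have hu₁ := contDiff_pdx hu
  have hu₂ := contDiff_pdx hu₁
  have hper₁ := pdx_add_of_periodic hper
  have hper₂ := pdx_add_of_periodic hper₁
  refine integral_eq_integral_of_conservation_law
    (ρ := fun x t => 1 / 2 * ‖pdx u x t‖ ^ 2 - 1 / 8 * ‖u x t‖ ^ 4)
    (ρ' := fun x t => ⟪pdx u x t, pdt (pdx u) x t⟫ - 1 / 2 * ‖u x t‖ ^ 2 * ⟪u x t, pdt u x t⟫)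
    (J := fun x t => energyFlux (u x t) (pdx u x t) (pdx (pdx u) x t) (pdx (pdx (pdx u)) x t))
    (by have := hu.continuous; have := hu₁.continuous; fun_prop)
    (by have := hu.continuous; have := hu₁.continuous; have := (contDiff_pdt hu).continuous;
        have := (contDiff_pdt hu₁).continuous; fun_prop)
    (fun x t => ?_) (fun x t => ?_) (fun t => ?_) s t
  · have h := ((ht hu₁ x t).norm_sq.const_mul (1 / 2)).sub
      (((ht hu x t).norm_sq.fun_pow 2).const_mul (1 / 8))
    refine (h.congr_of_eventuallyEq (.of_forall fun s => ?_)).congr_deriv ?_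
    · simp only [Pi.sub_apply]; ring
    · push_cast; ring
  · have hw : HasDerivAt (fun y => vmkdvField (u y t) (pdx u y t) (pdx (pdx (pdx u)) y t))
        (pdt (pdx u) x t) x := by
      rw [← pdx_pdt_comm (hu.of_le ENat.LEInfty.out) x t]
      simpa only [hsol.pdt_eq] using hx (contDiff_pdt hu) x t
    exact hsol.pdt_eq x t ▸ hasDerivAt_energyFlux (hx hu x t) (hx hu₁ x t) (hx hu₂ x t)
      (hx (contDiff_pdx hu₂) x t) hw
  · refine Periodic.eq (f := fun x => energyFlux (u x t) (pdx u x t) (pdx (pdx u) x t)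
      (pdx (pdx (pdx u)) x t)) fun x => ?_
    simp only [hper, hper₁, hper₂, pdx_add_of_periodic hper₂]

end IsVmKdV

theorem sq_le_two_mul_add_sq_of_sq_le_add_mul {s b c : ℝ} (h : s ^ 2 ≤ c + b * s) :
    s ^ 2 ≤ 2 * c + b ^ 2 := by
  nlinarith [sq_nonneg (b - s)]

/-- Applied with `X = ‖u_x‖₂²`, `P = ‖u‖₂²`, `Q = ‖u‖₄⁴`. -/
theorem le_of_energy_of_gagliardoNirenberg {X P Q K C : ℝ} (hX : 0 ≤ X) (hP : 0 ≤ P) (hQ : 0 ≤ Q)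
    (hE : X = 2 * C + Q / 4)
    (hGN : Q ^ (1 / 4 : ℝ) ≤ K * P ^ (3 / 8 : ℝ) * X ^ (1 / 8 : ℝ)) :
    X ≤ 4 * C + K ^ 8 * P ^ 3 / 16 := by
  set y := X ^ (1 / 8 : ℝ)
  set p := P ^ (3 / 8 : ℝ)
  have hXy : X = (y ^ 4) ^ 2 := by
    rw [← pow_mul, ← Real.rpow_mul_natCast hX]; norm_num
  have hPp : P ^ 3 = p ^ 8 := by
    rw [← Real.rpow_mul_natCast hP, ← Real.rpow_natCast]; norm_num
  have hQq : Q ≤ K ^ 4 * p ^ 4 * y ^ 4 := by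
    calc Q = (Q ^ (1 / 4 : ℝ)) ^ 4 := by rw [← Real.rpow_mul_natCast hQ]; norm_num
      _ ≤ (K * p * y) ^ 4 := pow_le_pow_left₀ (by positivity) hGN 4
      _ = K ^ 4 * p ^ 4 * y ^ 4 := by ring
  have hquad : (y ^ 4) ^ 2 ≤ 2 * C + (K ^ 4 * p ^ 4 / 4) * y ^ 4 := by
    rw [← hXy]; linarith
  rw [hPp, hXy]
  linarith [sq_le_two_mul_add_sq_of_sq_le_add_mul hquad]

theorem vmkdv_stability_bound_general (d : ℕ)
    (u : ℝ → ℝ → EuclideanSpace ℝ (Fin d))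
    (hu : ContDiff ℝ ∞ (Function.uncurry u))
    (hsol : IsVmKdV u)
    (hper : ∀ x t : ℝ, u (x + 1) t = u x t)
    (C₂ C₄ : ℝ)
    (hC₂ : C₂ = ∫ x in (0:ℝ)..1, (1 : ℝ) / 2 * ‖u x 0‖ ^ 2)
    (hC₄ : C₄ = ∫ x in (0:ℝ)..1, (1 : ℝ) / 2 * ‖pdx u x 0‖ ^ 2 - (1 : ℝ) / 8 * ‖u x 0‖ ^ 4)
    (CGN : ℝ)
    (hGN : ∀ t : ℝ,
      (∫ x in (0:ℝ)..1, ‖u x t‖ ^ 4) ^ ((1 : ℝ) / 4)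
        ≤ CGN * (∫ x in (0:ℝ)..1, ‖u x t‖ ^ 2) ^ ((3 : ℝ) / 8)
            * (∫ x in (0:ℝ)..1, ‖pdx u x t‖ ^ 2) ^ ((1 : ℝ) / 8)) :
    ∀ t : ℝ,
      (∫ x in (0:ℝ)..1, ‖pdx u x t‖ ^ 2) ^ ((1 : ℝ) / 2)
        ≤ (4 * C₄ + CGN ^ 8 * C₂ ^ 3 / 2) ^ ((1 : ℝ) / 2) := by
  intro t
  have hnonneg {f : ℝ → ℝ} (hf : ∀ x, 0 ≤ f x) : 0 ≤ ∫ x in (0 : ℝ)..1, f x :=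
    intervalIntegral.integral_nonneg zero_le_one fun x _ => hf x
  have hu₀ := hu.continuous.uncurry_right t
  have hu₁ := (contDiff_pdx hu).continuous.uncurry_right t
  have hmomentum : ∫ x in (0 : ℝ)..1, ‖u x t‖ ^ 2 = 2 * C₂ := by
    rw [hC₂, ← hsol.momentum_conserved hu hper t 0, intervalIntegral.integral_const_mul]
    ring
  have henergy : ∫ x in (0 : ℝ)..1, ‖pdx u x t‖ ^ 2
      = 2 * C₄ + (∫ x in (0 : ℝ)..1, ‖u x t‖ ^ 4) / 4 := by
    rw [hC₄, ← hsol.energy_conserved hu hper t 0, intervalIntegral.integral_sub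
      (Continuous.intervalIntegrable (by fun_prop) _ _)
      (Continuous.intervalIntegrable (by fun_prop) _ _),
      intervalIntegral.integral_const_mul, intervalIntegral.integral_const_mul]
    ring
  have hbound := le_of_energy_of_gagliardoNirenberg (hnonneg fun x => by positivity)
    (hnonneg fun x => by positivity) (hnonneg fun x => by positivity) henergy (hGN t)
  rw [hmomentum] at hbound
  exact Real.rpow_le_rpow (hnonneg fun x => by positivity) (by linarith) (by norm_num)

theorem vmkdv_stability_bound (d : ℕ) (hd : 1 ≤ d)
    (u : ℝ → ℝ → EuclideanSpace ℝ (Fin d))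
    (hu : ContDiff ℝ ∞ (Function.uncurry u))
    (hsol : IsVmKdV u)
    (hper : ∀ x t : ℝ, u (x + 1) t = u x t)
    (C₂ C₄ : ℝ)
    (hC₂ : C₂ = ∫ x in (0:ℝ)..1, (1 : ℝ) / 2 * ‖u x 0‖ ^ 2)
    (hC₄ : C₄ = ∫ x in (0:ℝ)..1, (1 : ℝ) / 2 * ‖pdx u x 0‖ ^ 2 - (1 : ℝ) / 8 * ‖u x 0‖ ^ 4)
    (CGN : ℝ) (hCGN : 0 < CGN)
    (hGN : ∀ t : ℝ,
      (∫ x in (0:ℝ)..1, ‖u x t‖ ^ 4) ^ ((1 : ℝ) / 4)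
        ≤ CGN * (∫ x in (0:ℝ)..1, ‖u x t‖ ^ 2) ^ ((3 : ℝ) / 8)
            * (∫ x in (0:ℝ)..1, ‖pdx u x t‖ ^ 2) ^ ((1 : ℝ) / 8)) :
    ∀ t : ℝ,
      (∫ x in (0:ℝ)..1, ‖pdx u x t‖ ^ 2) ^ ((1 : ℝ) / 2)
        ≤ (4 * C₄ + CGN ^ 8 * C₂ ^ 3 / 2) ^ ((1 : ℝ) / 2) :=
  vmkdv_stability_bound_general d u hu hsol hper C₂ C₄ hC₂ hC₄ CGN hGN
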